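/- Strategies that cooperate outside a commitment are never evolutionarily stable: assume T > R > P > S. For Π ∈ {Π_R, Π_P} with any ε, any u, any α ∈ [0,1], and any χ ∈ [0,1), none of the strategies ACC, ADC, NCC, NDC is an evolutionarily stable strategy of the noisy payoff matrix Π̃. (Specifically, Π̃(ACD,ACC) − Π̃(ACC,ACC) = χ(2−χ)(T−R), Π̃(ADD,ADC) − Π̃(ADC,ADC) = χ(2−χ)(T−R), Π̃(NCD,NCC) − Π̃(NCC,NCC) = (1−χ²)(T−R), and Π̃(NDD,NDC) − Π̃(NDC,NDC) = (1−χ²)(T−R); in the cases where these differences vanish at χ = 0, the corresponding second-order ESS comparisons are equalities, so the ESS conditions fail.) -/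

import Mathlib

/-- A strategy in the commitment game: whether to accept a prior commitment
(`commit = true` means "A"), the action if a commitment is formed
(`inAct = true` means "C"), and the action if no commitment is formed
(`outAct = true` means "C"). -/
structure Strat where
  commit : Bool
  inAct : Bool
  outAct : Bool
deriving DecidableEq

def ACC : Strat := ⟨true, true, true⟩
def ACD : Strat := ⟨true, true, false⟩
def ADC : Strat := ⟨true, false, true⟩
def ADD : Strat := ⟨true, false, false⟩
def NCC : Strat := ⟨false, true, true⟩
def NCD : Strat := ⟨false, true, false⟩
def NDC : Strat := ⟨false, false, true⟩
def NDD : Strat := ⟨false, false, false⟩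

/-- Row player's payoff in the one-shot Prisoner's Dilemma with payoffs
`T, R, P, S`; `true` codes cooperation. -/
def pd (T R P S : ℝ) (myC otherC : Bool) : ℝ :=
  if myC then (if otherC then R else S) else (if otherC then T else P)

/-- The reward payoff matrix `Π_R`: the row player receives its PD payoff
(commitment formed iff both commit; then each pays `ε/2` and plays its
in-commitment action, otherwise both play their no-commitment actions),
plus `α·u` if it accepted the commitment, plus an additional `(1−α)·u`
if a commitment is formed and it cooperates in it. -/
noncomputable def payR (T R P S ε u α : ℝ) (s t : Strat) : ℝ :=
  (if s.commit ∧ t.commit then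
      pd T R P S s.inAct t.inAct - ε / 2 + (if s.inAct then (1 - α) * u else 0)
   else pd T R P S s.outAct t.outAct)
  + (if s.commit then α * u else 0)

/-- The punishment payoff matrix `Π_P`: as `Π_R` except that instead of the
reward `(1−α)·u` for compliance, the amount `(1−α)·u` is subtracted when a
commitment is formed and the row player defects in it. -/
noncomputable def payP (T R P S ε u α : ℝ) (s t : Strat) : ℝ :=
  (if s.commit ∧ t.commit then
      pd T R P S s.inAct t.inAct - ε / 2 - (if s.inAct then 0 else (1 - α) * u)
   else pd T R P S s.outAct t.outAct)
  + (if s.commit then α * u else 0)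

/-- Flip the participation decision of a strategy (A ↔ N). -/
def flipPart (s : Strat) : Strat := ⟨!s.commit, s.inAct, s.outAct⟩

/-- The noisy payoff matrix `Π̃`: with probability `χ` each player independently
errs in its decision whether to join the commitment. -/
noncomputable def noisy (χ : ℝ) (M : Strat → Strat → ℝ) (s t : Strat) : ℝ :=
  (1 - χ) ^ 2 * M s t + χ * (1 - χ) * (M (flipPart s) t + M s (flipPart t))
    + χ ^ 2 * M (flipPart s) (flipPart t)

/-- Strategy `a` is risk-dominant against strategy `b` under payoff matrix `Π`. -/
def RiskDom (M : Strat → Strat → ℝ) (a b : Strat) : Prop :=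
  M a a + M a b > M b a + M b b

/-- `x` is an evolutionarily stable strategy (ESS) of the payoff matrix `Π`. -/
def IsESS (M : Strat → Strat → ℝ) (x : Strat) : Prop :=
  ∀ y : Strat, y ≠ x → M x x > M y x ∨ (M x x = M y x ∧ M x y > M y y)

/-!
Let `y` be the mutant of `x` that defects outside a commitment. Against the resident `x`, which
cooperates outside a commitment, `y` gains exactly `T - R` in every encounter in which, after
the participation errors, no commitment forms, and loses nothing otherwise. So `y` does at least
as well as `x`, strictly unless a commitment forms with certainty, i.e. unless `x` accepts and
`χ = 0`. In that remaining case every encounter among `x` and `y` forms a commitment, where the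
two strategies are indistinguishable, so `y` also ties in the second-order comparison.
-/

theorem not_isESS_of_le {M : Strat → Strat → ℝ} {x y : Strat} (hyx : y ≠ x)
    (hfirst : M x x ≤ M y x) (hsecond : M x x = M y x → M x y ≤ M y y) : ¬ IsESS M x := by
  intro hx
  rcases hx y hyx with hlt | ⟨heq, hgt⟩
  · exact hlt.not_ge hfirst
  · exact hgt.not_ge (hsecond heq)

theorem noisy_zero (M : Strat → Strat → ℝ) : noisy 0 M = M := by
  ext s t
  simp [noisy]

/-- The probability that no commitment forms between two players who both intend to accept
(`c = true`) or both intend to refuse (`c = false`), when each flips its decision with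
probability `χ`. -/
def noCommitProb (χ : ℝ) (c : Bool) : ℝ := if c then χ * (2 - χ) else 1 - χ ^ 2

theorem noCommitProb_nonneg {χ : ℝ} (hχ₀ : 0 ≤ χ) (hχ₁ : χ < 1) (c : Bool) :
    0 ≤ noCommitProb χ c := by
  cases c <;> simp only [noCommitProb, Bool.false_eq_true, if_true, if_false] <;> nlinarith

theorem noCommitProb_eq_zero {χ : ℝ} (hχ₀ : 0 ≤ χ) (hχ₁ : χ < 1) {c : Bool}
    (h : noCommitProb χ c = 0) : c = true ∧ χ = 0 := by
  cases c <;> simp only [noCommitProb, Bool.false_eq_true, if_true, if_false] at h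
  · nlinarith
  · exact ⟨rfl, by nlinarith⟩

def Strat.defectOutside (s : Strat) : Strat := { s with outAct := false }

theorem Strat.defectOutside_ne {s : Strat} (hs : s.outAct = true) : s.defectOutside ≠ s := by
  intro h
  simpa [Strat.defectOutside, hs] using congrArg Strat.outAct h

theorem flipPart_defectOutside (s : Strat) :
    flipPart s.defectOutside = (flipPart s).defectOutside := rfl

section Payoffs

variable {T R P S ε u α χ : ℝ} {M : Strat → Strat → ℝ}

theorem defectOutside_payoff_sub
    (hM : M = payR T R P S ε u α ∨ M = payP T R P S ε u α) (s t : Strat) :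
    M s.defectOutside t - M s t =
      if s.commit ∧ t.commit then 0
      else pd T R P S false t.outAct - pd T R P S s.outAct t.outAct := by
  rcases hM with rfl | rfl <;>
    · dsimp only [payR, payP, Strat.defectOutside]
      split_ifs <;> ring

theorem self_defectOutside_eq
    (hM : M = payR T R P S ε u α ∨ M = payP T R P S ε u α) {s : Strat} (hs : s.commit = true) :
    M s s.defectOutside = M s.defectOutside s.defectOutside := by
  have h := defectOutside_payoff_sub hM s s.defectOutside
  rw [if_pos ⟨hs, hs⟩] at h
  linarith

theorem noisy_defectOutside_sub_self
    (hM : M = payR T R P S ε u α ∨ M = payP T R P S ε u α) {s : Strat} (hs : s.outAct = true) :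
    noisy χ M s.defectOutside s - noisy χ M s s = noCommitProb χ s.commit * (T - R) := by
  have h₁ := defectOutside_payoff_sub hM s s
  have h₂ := defectOutside_payoff_sub hM (flipPart s) s
  have h₃ := defectOutside_payoff_sub hM s (flipPart s)
  have h₄ := defectOutside_payoff_sub hM (flipPart s) (flipPart s)
  simp only [noisy, flipPart_defectOutside]
  cases hc : s.commit <;>
    simp only [noCommitProb, flipPart, hc, hs, pd, Bool.not_true, Bool.not_false,
      Bool.false_eq_true, and_self, and_false, false_and, if_true, if_false] at h₁ h₂ h₃ h₄ ⊢ <;>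
    linear_combination (1 - χ) ^ 2 * h₁ + χ * (1 - χ) * (h₂ + h₃) + χ ^ 2 * h₄

theorem not_isESS_noisy_of_outAct (hTR : T > R) (hχ₀ : 0 ≤ χ) (hχ₁ : χ < 1)
    (hM : M = payR T R P S ε u α ∨ M = payP T R P S ε u α) {s : Strat} (hs : s.outAct = true) :
    ¬ IsESS (noisy χ M) s := by
  have hgain := noisy_defectOutside_sub_self (χ := χ) hM hs
  have hTR' : 0 < T - R := sub_pos.mpr hTR
  refine not_isESS_of_le (Strat.defectOutside_ne hs) ?_ fun htie => ?_
  · nlinarith [noCommitProb_nonneg hχ₀ hχ₁ s.commit]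
  · have hzero : noCommitProb χ s.commit = 0 := by
      have : noCommitProb χ s.commit * (T - R) = 0 := by linarith
      exact (mul_eq_zero.mp this).resolve_right hTR'.ne'
    obtain ⟨hc, rfl⟩ := noCommitProb_eq_zero hχ₀ hχ₁ hzero
    rw [noisy_zero, self_defectOutside_eq hM hc]

end Payoffs

theorem out_of_commitment_cooperators_never_ESS_general (T R P S ε u α χ : ℝ)
    (hTR : T > R)
    (hχ : 0 ≤ χ ∧ χ < 1)
    (M : Strat → Strat → ℝ)
    (hM : M = payR T R P S ε u α ∨ M = payP T R P S ε u α) :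
    (¬ IsESS (noisy χ M) ACC) ∧ (¬ IsESS (noisy χ M) ADC) ∧
    (¬ IsESS (noisy χ M) NCC) ∧ (¬ IsESS (noisy χ M) NDC) ∧
    (noisy χ M ACD ACC - noisy χ M ACC ACC = χ * (2 - χ) * (T - R)) ∧
    (noisy χ M ADD ADC - noisy χ M ADC ADC = χ * (2 - χ) * (T - R)) ∧
    (noisy χ M NCD NCC - noisy χ M NCC NCC = (1 - χ ^ 2) * (T - R)) ∧
    (noisy χ M NDD NDC - noisy χ M NDC NDC = (1 - χ ^ 2) * (T - R)) ∧
    (χ = 0 →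
      noisy χ M ACC ACD = noisy χ M ACD ACD ∧
      noisy χ M ADC ADD = noisy χ M ADD ADD) := by
  have gain {s : Strat} (hs : s.outAct = true) := noisy_defectOutside_sub_self (χ := χ) hM hs
  have never {s : Strat} (hs : s.outAct = true) := not_isESS_noisy_of_outAct hTR hχ.1 hχ.2 hM hs
  refine ⟨never rfl, never rfl, never rfl, never rfl, gain (s := ACC) rfl, gain (s := ADC) rfl,
    gain (s := NCC) rfl, gain (s := NDC) rfl, ?_⟩
  rintro rfl
  rw [noisy_zero]
  exact ⟨self_defectOutside_eq hM (s := ACC) rfl, self_defectOutside_eq hM (s := ADC) rfl⟩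

/-- **Strategies that cooperate outside a commitment are never evolutionarily
stable.**
Assume `T > R > P > S`. For `Π ∈ {Π_R, Π_P}` with any `ε`, `u`, `α ∈ [0,1]` and any
`χ ∈ [0,1)`, none of ACC, ADC, NCC, NDC is an ESS of the noisy matrix `Π̃`.
Specifically, `Π̃(ACD,ACC) − Π̃(ACC,ACC) = χ(2−χ)(T−R)`,
`Π̃(ADD,ADC) − Π̃(ADC,ADC) = χ(2−χ)(T−R)`,
`Π̃(NCD,NCC) − Π̃(NCC,NCC) = (1−χ²)(T−R)`, and
`Π̃(NDD,NDC) − Π̃(NDC,NDC) = (1−χ²)(T−R)`; and where these differences vanish at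
`χ = 0`, the corresponding second-order ESS comparisons are equalities. -/
theorem out_of_commitment_cooperators_never_ESS (T R P S ε u α χ : ℝ)
    (hTR : T > R) (hRP : R > P) (hPS : P > S)
    (hα : 0 ≤ α ∧ α ≤ 1) (hχ : 0 ≤ χ ∧ χ < 1)
    (M : Strat → Strat → ℝ)
    (hM : M = payR T R P S ε u α ∨ M = payP T R P S ε u α) :
    (¬ IsESS (noisy χ M) ACC) ∧ (¬ IsESS (noisy χ M) ADC) ∧
    (¬ IsESS (noisy χ M) NCC) ∧ (¬ IsESS (noisy χ M) NDC) ∧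
    (noisy χ M ACD ACC - noisy χ M ACC ACC = χ * (2 - χ) * (T - R)) ∧
    (noisy χ M ADD ADC - noisy χ M ADC ADC = χ * (2 - χ) * (T - R)) ∧
    (noisy χ M NCD NCC - noisy χ M NCC NCC = (1 - χ ^ 2) * (T - R)) ∧
    (noisy χ M NDD NDC - noisy χ M NDC NDC = (1 - χ ^ 2) * (T - R)) ∧
    (χ = 0 →
      noisy χ M ACC ACD = noisy χ M ACD ACD ∧
      noisy χ M ADC ADD = noisy χ M ADD ADD) :=
  out_of_commitment_cooperators_never_ESS_general T R P S ε u α χ hTR hχ M hM
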